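/- arXiv:2410.14300 — 2 statements merged into one kernel-verified Lean document; each statement's English description precedes it below -/
import Mathlib

section
/- Let 1 ≤ d ≤ 3, p ≥ 2, C_0 > 0 and μ > 0, and let u(x) = [μ − C_0|x|^p]_+^{1/4} for x ∈ ℝ^d. Then the gradient of u is not square-integrable: ∫_{B(0,(μ/C_0)^{1/p})} |∇u(x)|² dx = +∞, where on the open ball B(0,(μ/C_0)^{1/p}) one has |∇u(x)|² = (p²C_0²/16)(μ − C_0|x|^p)^{−3/2}|x|^{2(p−1)}. -/
open MeasureTheory Filter

noncomputable section

abbrev Euc (d : ℕ) := EuclideanSpace ℝ (Fin d)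

def atInfty (d : ℕ) : Filter (Euc d) := Filter.comap (fun x => ‖x‖) Filter.atTop

def V1cond (d : ℕ) (V : Euc d → ℝ) : Prop :=
  ContDiff ℝ 1 V ∧ (∀ x, 0 ≤ V x) ∧ ∀ x y : Euc d, ‖x‖ ≤ ‖y‖ → V x ≤ V y

def V2cond (d : ℕ) (V : Euc d → ℝ) (C₀ p : ℝ) : Prop :=
  Tendsto (fun x : Euc d => (inner ℝ (gradient V x) x : ℝ) / (p * ‖x‖ ^ p)) (atInfty d) (nhds C₀)

def V3cond (d : ℕ) (V : Euc d → ℝ) (C₀ C₁ p α : ℝ) : Prop :=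
  Tendsto (fun x : Euc d => ((inner ℝ (gradient V x) x : ℝ) - C₀ * p * ‖x‖ ^ p) / ‖x‖ ^ α)
    (atInfty d) (nhds C₁)

def V4cond (d : ℕ) (V : Euc d → ℝ) (C₀ C₂ p α : ℝ) : Prop :=
  Tendsto (fun x : Euc d => (V x - C₀ * ‖x‖ ^ p) / ‖x‖ ^ α) (atInfty d) (nhds C₂)

def InH1 (d : ℕ) (V : Euc d → ℝ) (m : ℝ) (φ : Euc d → ℝ) : Prop :=
  MemLp φ 2 volume ∧
  Integrable (fun x : Euc d => ‖fderiv ℝ φ x‖ ^ 2) volume ∧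
  Integrable (fun x : Euc d => V x * φ x ^ 2) volume ∧
  ∫ x : Euc d, φ x ^ 2 = m

def EnergyN (d : ℕ) (V : Euc d → ℝ) (κ N : ℝ) (φ : Euc d → ℝ) : ℝ :=
  (1/2) * ∫ x : Euc d, (‖fderiv ℝ φ x‖ ^ 2 + V x * φ x ^ 2) +
  (κ * N / 4) * ∫ x : Euc d, φ x ^ 4 +
  (N ^ 2 / 6) * ∫ x : Euc d, φ x ^ 6

def glevel (d : ℕ) (V : Euc d → ℝ) (κ N : ℝ) : ℝ :=
  sInf ((EnergyN d V κ N) '' {φ | InH1 d V 1 φ})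

def IsGroundState (d : ℕ) (V : Euc d → ℝ) (κ N : ℝ) (φ : Euc d → ℝ) : Prop :=
  InH1 d V 1 φ ∧ ∀ ψ, InH1 d V 1 ψ → EnergyN d V κ N φ ≤ EnergyN d V κ N ψ

def omegaSurf (d : ℕ) : ℝ := d * (volume (Metric.ball (0 : Euc d) 1)).toReal

def BetaFn (P Q : ℝ) : ℝ := ∫ x in (0:ℝ)..1, x ^ (P - 1) * (1 - x) ^ (Q - 1)

def muTF (d : ℕ) (C₀ p : ℝ) : ℝ :=
  (p / (omegaSurf d * C₀ ^ (-(d : ℝ) / p) * BetaFn ((d : ℝ) / p) (3/2))) ^ (2 * p / (2 * (d:ℝ) + p))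

def uTF (d : ℕ) (C₀ p : ℝ) (x : Euc d) : ℝ :=
  (max 0 (muTF d C₀ p - C₀ * ‖x‖ ^ p)) ^ ((1:ℝ)/4)

def TFadm (d : ℕ) (p : ℝ) (u : Euc d → ℝ) : Prop :=
  MemLp u 2 volume ∧ MemLp u 6 volume ∧
  Integrable (fun x : Euc d => ‖x‖ ^ p * u x ^ 2) volume ∧
  ∫ x : Euc d, u x ^ 2 = 1

def ETF (d : ℕ) (C₀ p : ℝ) (u : Euc d → ℝ) : ℝ :=
  (C₀ / 2) * ∫ x : Euc d, ‖x‖ ^ p * u x ^ 2 + (1/6) * ∫ x : Euc d, u x ^ 6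

def eTFinf (d : ℕ) (C₀ p : ℝ) : ℝ := sInf ((ETF d C₀ p) '' {u | TFadm d p u})

def Itau (d : ℕ) (V : Euc d → ℝ) (κ p τ : ℝ) (u : Euc d → ℝ) : ℝ :=
  (τ ^ (p + 2) / 2) * ∫ x : Euc d, ‖fderiv ℝ u x‖ ^ 2 +
  (τ ^ p / 2) * ∫ x : Euc d, V (τ⁻¹ • x) * u x ^ 2 +
  (κ * τ ^ (p/2) / 4) * ∫ x : Euc d, u x ^ 4 +
  (1/6) * ∫ x : Euc d, u x ^ 6

def etau (d : ℕ) (V : Euc d → ℝ) (κ p τ : ℝ) : ℝ :=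
  sInf ((Itau d V κ p τ) '' {u | InH1 d V 1 u})

def lap (d : ℕ) (u : Euc d → ℝ) (x : Euc d) : ℝ :=
  ∑ i : Fin d, fderiv ℝ (fun y => fderiv ℝ u y (EuclideanSpace.single i 1)) x (EuclideanSpace.single i 1)

/-! Inside the ball `C₀ ‖x‖ ^ p < μ` the profile is `(μ - C₀ ‖x‖ ^ p) ^ (1/4)` near every point, and
the chain rule gives its gradient. Writing `μ = C₀ R ^ p`, the tangent line of the convex function
`r ↦ r ^ p` at `R` gives `μ - C₀ r ^ p ≤ C₀ p R ^ (p - 1) (R - r)`, so in polar coordinates the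
radial integrand dominates a multiple of `(R - r) ^ (-3/2)`, which is not integrable at `R`. -/

open Set Metric InnerProductSpace

theorem lt_rpow_one_div_iff_mul_rpow_lt {r μ C₀ p : ℝ} (hr : 0 ≤ r) (hμ : 0 ≤ μ) (hC₀ : 0 < C₀)
    (hp : 0 < p) : r < (μ / C₀) ^ (1 / p) ↔ C₀ * r ^ p < μ := by
  rw [one_div, Real.lt_rpow_inv_iff_of_pos hr (div_nonneg hμ hC₀.le) hp, lt_div_iff₀' hC₀]

theorem rpow_sub_rpow_le_mul_sub {r R p : ℝ} (hr : 0 ≤ r) (hR : 0 < R) (hp : 1 ≤ p) :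
    R ^ p - r ^ p ≤ p * R ^ (p - 1) * (R - r) := by
  have hbern := one_add_mul_self_le_rpow_one_add (s := r / R - 1)
    (by linarith [div_nonneg hr hR.le]) hp
  rw [add_sub_cancel, Real.div_rpow hr hR.le, le_div_iff₀ (by positivity)] at hbern
  calc R ^ p - r ^ p ≤ R ^ p - (1 + p * (r / R - 1)) * R ^ p := by linarith
    _ = p * R ^ (p - 1) * (R - r) := by
      rw [Real.rpow_sub_one hR.ne']
      field_simp
      ring

theorem rpow_mul_sub_rpow_le_sub_rpow {r R C₀ p s : ℝ} (hr : 0 ≤ r) (hrR : r < R) (hC₀ : 0 < C₀)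
    (hp : 1 ≤ p) (hs : s ≤ 0) :
    (C₀ * p * R ^ (p - 1)) ^ s * (R - r) ^ s ≤ (C₀ * R ^ p - C₀ * r ^ p) ^ s := by
  have hR : 0 < R := hr.trans_lt hrR
  have hpos : 0 < C₀ * R ^ p - C₀ * r ^ p := by
    rw [← mul_sub]
    exact mul_pos hC₀ (sub_pos.2 (Real.rpow_lt_rpow hr hrR (by linarith)))
  rw [← Real.mul_rpow (by positivity) (sub_pos.2 hrR).le]
  refine Real.rpow_le_rpow_of_nonpos hpos ?_ hs
  calc C₀ * R ^ p - C₀ * r ^ p = C₀ * (R ^ p - r ^ p) := by ring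
    _ ≤ C₀ * (p * R ^ (p - 1) * (R - r)) := by grw [rpow_sub_rpow_le_mul_sub hr hR hp]
    _ = C₀ * p * R ^ (p - 1) * (R - r) := by ring

theorem not_integrableOn_Ioo_of_mul_sub_rpow_le {g : ℝ → ℝ} {a b s K : ℝ} (hab : a < b)
    (hs : s ≤ -1) (hK : 0 < K) (hg : ∀ r ∈ Ioo a b, K * (b - r) ^ s ≤ g r) :
    ¬ IntegrableOn g (Ioo a b) := by
  intro hint
  have hsub : IntegrableOn (fun r => (b - r) ^ s) (Ioo a b) := by
    refine (hint.div_const K).mono'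
      ((measurable_const.sub measurable_id).pow_const s).aestronglyMeasurable
      (ae_restrict_of_forall_mem measurableSet_Ioo fun r hr => ?_)
    rw [Real.norm_of_nonneg (Real.rpow_nonneg (sub_pos.2 hr.2).le s), le_div_iff₀' hK]
    exact hg r hr
  have hint' := ((intervalIntegrable_iff_integrableOn_Ioo_of_le hab.le).2 hsub).comp_sub_left b
  simp only [sub_sub_cancel, sub_self] at hint'
  replace hint' := hint'.symm
  rw [intervalIntegrable_iff_integrableOn_Ioo_of_le (sub_pos.2 hab).le,
    intervalIntegral.integrableOn_Ioo_rpow_iff (sub_pos.2 hab)] at hint'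
  linarith

section Radial

variable {E : Type*} [NormedAddCommGroup E] [NormedSpace ℝ E] [FiniteDimensional ℝ E]
  [MeasurableSpace E] [BorelSpace E] [Nontrivial E] (ν : Measure E) [ν.IsAddHaarMeasure]

theorem setLIntegral_ball_ofReal_fun_norm_eq_top {f : ℝ → ℝ} {R : ℝ} (hf : Measurable f)
    (hf₀ : ∀ r ∈ Ico 0 R, 0 ≤ f r)
    (hni : ¬ IntegrableOn (fun r => r ^ (Module.finrank ℝ E - 1) * f r) (Ioo 0 R)) :
    ∫⁻ x in ball (0 : E) R, ENNReal.ofReal (f ‖x‖) ∂ν = ⊤ := by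
  by_contra hfin
  have hnonneg : 0 ≤ᵐ[ν.restrict (ball 0 R)] fun x => f ‖x‖ :=
    ae_restrict_of_forall_mem measurableSet_ball fun x hx =>
      hf₀ _ ⟨norm_nonneg x, mem_ball_zero_iff.1 hx⟩
  have hint := (lintegral_ofReal_ne_top_iff_integrable
    (hf.comp measurable_norm).aestronglyMeasurable hnonneg).1 hfin
  exact hni (by simpa only [smul_eq_mul] using (integrableOn_fun_norm_addHaar ν).1 hint)

end Radial

section Gradient

variable {E : Type*} [NormedAddCommGroup E] [InnerProductSpace ℝ E] [CompleteSpace E]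

theorem hasGradientAt_rpow_sub_mul_norm_rpow {μ C₀ p q : ℝ} {x : E} (hp : 1 < p)
    (hx : 0 < μ - C₀ * ‖x‖ ^ p) :
    HasGradientAt (fun x => (μ - C₀ * ‖x‖ ^ p) ^ q)
      ((-(q * C₀ * p) * (μ - C₀ * ‖x‖ ^ p) ^ (q - 1) * ‖x‖ ^ (p - 2)) • x) x := by
  have h := (Real.hasDerivAt_rpow_const (p := q) (Or.inl hx.ne')).comp_hasFDerivAt x
    (((hasFDerivAt_norm_rpow x hp).const_mul C₀).const_sub μ)
  rw [hasGradientAt_iff_hasFDerivAt]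
  refine h.congr_fderiv ?_
  ext y
  simp only [smul_neg, neg_apply, smul_apply, coe_innerSL_apply, smul_eq_mul, neg_mul, neg_smul,
    map_neg, map_smul, toDual_apply_apply, neg_inj]
  ring

theorem rpow_sub_two_sq_mul_sq {t p : ℝ} (ht : 0 ≤ t) (hp : 1 < p) :
    (t ^ (p - 2)) ^ 2 * t ^ 2 = t ^ (2 * (p - 1)) := by
  have hsplit : t ^ p = t ^ (p - 2) * t ^ 2 := by
    rw [← Real.rpow_natCast, ← Real.rpow_add' ht (by norm_num; linarith)]
    norm_num
  rw [show 2 * (p - 1) = (p - 2) + p by ring, Real.rpow_add' ht (by linarith), hsplit]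
  ring

theorem norm_sq_gradient_thomasFermi {μ C₀ p : ℝ} {x : E} (hp : 1 < p) (hx : C₀ * ‖x‖ ^ p < μ) :
    ‖gradient (fun x => (max 0 (μ - C₀ * ‖x‖ ^ p)) ^ ((1:ℝ)/4)) x‖ ^ 2
      = (p ^ 2 * C₀ ^ 2 / 16) * (μ - C₀ * ‖x‖ ^ p) ^ (-(3:ℝ)/2) * ‖x‖ ^ (2 * (p - 1)) := by
  have hpos : 0 < μ - C₀ * ‖x‖ ^ p := sub_pos.2 hx
  have hloc : (fun x => (max 0 (μ - C₀ * ‖x‖ ^ p)) ^ ((1:ℝ)/4)) =ᶠ[nhds x]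
      fun x => (μ - C₀ * ‖x‖ ^ p) ^ ((1:ℝ)/4) := by
    have hcont : Continuous fun x : E => μ - C₀ * ‖x‖ ^ p := by
      fun_prop (disch := linarith)
    filter_upwards [hcont.continuousAt.eventually (lt_mem_nhds hpos)] with y hy
    rw [max_eq_right hy.le]
  have hsq : ((μ - C₀ * ‖x‖ ^ p) ^ ((1:ℝ)/4 - 1)) ^ 2 = (μ - C₀ * ‖x‖ ^ p) ^ (-(3:ℝ)/2) := by
    rw [← Real.rpow_mul_natCast hpos.le]
    norm_num
  rw [((hasGradientAt_rpow_sub_mul_norm_rpow hp hpos).congr_of_eventuallyEq hloc).gradient,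
    norm_smul, mul_pow, Real.norm_eq_abs, sq_abs, ← rpow_sub_two_sq_mul_sq (norm_nonneg x) hp,
    ← hsq]
  ring

end Gradient

theorem not_integrableOn_Ioo_pow_mul_thomasFermi_density {μ C₀ p R c : ℝ} (n : ℕ) (hC₀ : 0 < C₀)
    (hp : 1 ≤ p) (hR : 0 < R) (hc : 0 < c) (hμ : C₀ * R ^ p = μ) :
    ¬ IntegrableOn (fun r => r ^ n * (c * (μ - C₀ * r ^ p) ^ (-(3:ℝ)/2) * r ^ (2 * (p - 1))))
      (Ioo 0 R) := by
  subst hμ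
  set K := (R / 2) ^ n * (c * (C₀ * p * R ^ (p - 1)) ^ (-(3:ℝ)/2) * (R / 2) ^ (2 * (p - 1)))
  have hK : 0 < K := by positivity
  intro hint
  refine not_integrableOn_Ioo_of_mul_sub_rpow_le (s := -(3:ℝ)/2) (half_lt_self hR) (by norm_num)
    hK ?_ (hint.mono_set (Ioo_subset_Ioo_left (half_pos hR).le))
  intro r ⟨hr, hrR⟩
  have hr₀ : 0 ≤ r := (half_pos hR).le.trans hr.le
  calc K * (R - r) ^ (-(3:ℝ)/2)
      = (R / 2) ^ n * (c * ((C₀ * p * R ^ (p - 1)) ^ (-(3:ℝ)/2) * (R - r) ^ (-(3:ℝ)/2)) *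
          (R / 2) ^ (2 * (p - 1))) := by ring
    _ ≤ r ^ n * (c * (C₀ * R ^ p - C₀ * r ^ p) ^ (-(3:ℝ)/2) * r ^ (2 * (p - 1))) := by
      have hbound := rpow_mul_sub_rpow_le_sub_rpow (s := -(3:ℝ)/2) hr₀ hrR hC₀ hp (by norm_num)
      have hdensity : 0 ≤ (C₀ * R ^ p - C₀ * r ^ p) ^ (-(3:ℝ)/2) :=
        (mul_nonneg (by positivity) (Real.rpow_nonneg (sub_pos.2 hrR).le _)).trans hbound
      gcongr

theorem thomas_fermi_gradient_not_square_integrable_general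
    (d : ℕ) (hd1 : 1 ≤ d) (C₀ p μ : ℝ) (hC₀ : 0 < C₀) (hp : 2 ≤ p)
    (hμ : 0 < μ) (u : Euc d → ℝ)
    (hu : u = fun x : Euc d => (max 0 (μ - C₀ * ‖x‖ ^ p)) ^ ((1:ℝ)/4)) :
    (∀ x ∈ Metric.ball (0 : Euc d) ((μ / C₀) ^ (1 / p)),
      ‖gradient u x‖ ^ 2
        = (p ^ 2 * C₀ ^ 2 / 16) * (μ - C₀ * ‖x‖ ^ p) ^ (-(3:ℝ)/2) * ‖x‖ ^ (2 * (p - 1))) ∧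
    ∫⁻ x in Metric.ball (0 : Euc d) ((μ / C₀) ^ (1 / p)),
      ENNReal.ofReal
        ((p ^ 2 * C₀ ^ 2 / 16) * (μ - C₀ * ‖x‖ ^ p) ^ (-(3:ℝ)/2) * ‖x‖ ^ (2 * (p - 1)))
      = ⊤ := by
  have hp₀ : 0 < p := by linarith
  have hmem {r : ℝ} (hr : 0 ≤ r) : r < (μ / C₀) ^ (1 / p) ↔ C₀ * r ^ p < μ :=
    lt_rpow_one_div_iff_mul_rpow_lt hr hμ.le hC₀ hp₀
  refine ⟨fun x hx => hu ▸ norm_sq_gradient_thomasFermi (by linarith)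
    ((hmem (norm_nonneg x)).1 (mem_ball_zero_iff.1 hx)), ?_⟩
  have : Nontrivial (Euc d) :=
    Module.nontrivial_of_finrank_pos (R := ℝ) (by rw [finrank_euclideanSpace_fin]; omega)
  have hR : C₀ * ((μ / C₀) ^ (1 / p)) ^ p = μ := by
    rw [← Real.rpow_mul (div_pos hμ hC₀).le, one_div_mul_cancel hp₀.ne', Real.rpow_one,
      mul_div_cancel₀ _ hC₀.ne']
  refine setLIntegral_ball_ofReal_fun_norm_eq_top volume
    (f := fun r => (p ^ 2 * C₀ ^ 2 / 16) * (μ - C₀ * r ^ p) ^ (-(3:ℝ)/2) * r ^ (2 * (p - 1)))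
    (by fun_prop) (fun r ⟨hr₀, hr⟩ => ?_) ?_
  · have hpos := sub_pos.2 ((hmem hr₀).1 hr)
    positivity
  · rw [finrank_euclideanSpace_fin]
    exact not_integrableOn_Ioo_pow_mul_thomasFermi_density _ hC₀ (by linarith) (by positivity)
      (by positivity) hR

/-- the gradient of the Thomas-Fermi profile is not square-integrable. -/
theorem thomas_fermi_gradient_not_square_integrable
    (d : ℕ) (hd1 : 1 ≤ d) (hd3 : d ≤ 3) (C₀ p μ : ℝ) (hC₀ : 0 < C₀) (hp : 2 ≤ p)
    (hμ : 0 < μ) (u : Euc d → ℝ)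
    (hu : u = fun x : Euc d => (max 0 (μ - C₀ * ‖x‖ ^ p)) ^ ((1:ℝ)/4)) :
    (∀ x ∈ Metric.ball (0 : Euc d) ((μ / C₀) ^ (1 / p)),
      ‖gradient u x‖ ^ 2
        = (p ^ 2 * C₀ ^ 2 / 16) * (μ - C₀ * ‖x‖ ^ p) ^ (-(3:ℝ)/2) * ‖x‖ ^ (2 * (p - 1))) ∧
    ∫⁻ x in Metric.ball (0 : Euc d) ((μ / C₀) ^ (1 / p)),
      ENNReal.ofReal
        ((p ^ 2 * C₀ ^ 2 / 16) * (μ - C₀ * ‖x‖ ^ p) ^ (-(3:ℝ)/2) * ‖x‖ ^ (2 * (p - 1)))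
      = ⊤ :=
  thomas_fermi_gradient_not_square_integrable_general d hd1 C₀ p μ hC₀ hp hμ u hu

end
end

section
/- Let K ⊂ ℝ^d be a nonempty open set and suppose u ∈ C²(K) is bounded on K and satisfies −Δu = f on K with f bounded on K. Then there exists a constant C depending only on d such that for every x ∈ K, |∇u(x)|² ≤ C·(‖f‖_{L^∞(K)}·‖u‖_{L^∞(K)} + dist(x, ∂K)^{−2}·‖u‖²_{L^∞(K)}). -/
/-
Barrier argument for the gradient (Gilbarg–Trudinger, §3.4). Fix `x`, a unit vector `e` and a
closed ball `B(x, R) ⊆ K`, and let `σ` be the reflection in the hyperplane through `x` orthogonal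
to `e`. On the half ball `{t > 0}`, `t = ⟪y - x, e⟫`, the odd part `φ = (u - u ∘ σ) / 2` vanishes on
the flat side, is at most `M_u` on the sphere and has `|Δφ| ≤ M_f`. The quadratic
`ψ = (M_u / R²) ‖y - x‖² + B t - (B / R) t²` with `B = d M_u / R + M_f R / 2` dominates `φ` on the
boundary and has `Δψ = -M_f`, so `φ ≤ ψ` by the weak maximum principle. Both vanish at `x`, hence
`∂_e u(x) = ∂_e φ(x) ≤ ∂_e ψ(x) = B`, i.e. `|∇u(x)| ≤ d M_u / R + M_f R / 2` for every admissible
`R`. Choosing `R` of the order of `min (√(M_u / M_f), dist(x, ∂K))` gives the estimate.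
-/

open MeasureTheory Filter

noncomputable section

open Topology Set Metric InnerProductSpace Laplacian Module
open scoped RealInnerProductSpace

theorem deriv_deriv_quadratic (α β γ s : ℝ) :
    deriv (deriv fun t : ℝ => α + β * t + γ * t ^ 2) s = 2 * γ := by
  have h (t : ℝ) : HasDerivAt (fun t : ℝ => α + β * t + γ * t ^ 2) (β + γ * (2 * t)) t := by
    simpa using (((hasDerivAt_id t).const_mul β).const_add α).fun_add
      ((hasDerivAt_pow 2 t).const_mul γ)
  have h' : HasDerivAt (fun t : ℝ => β + γ * (2 * t)) (γ * 2) s := by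
    simpa using (((hasDerivAt_id s).const_mul 2).const_mul γ).const_add β
  rw [funext fun t => (h t).deriv, h'.deriv]
  ring

theorem IsLocalMax.deriv_deriv_nonpos {g : ℝ → ℝ} {t : ℝ} (h : IsLocalMax g t)
    (hc : ContinuousAt g t) : deriv (deriv g) t ≤ 0 := by
  by_contra! hpos
  have hconst : g =ᶠ[𝓝 t] fun _ => g t :=
    (h.and (isLocalMin_of_deriv_deriv_pos hpos h.deriv_eq_zero hc)).mono
      fun s hs => le_antisymm hs.1 hs.2
  have hderiv : deriv g =ᶠ[𝓝 t] fun _ => 0 :=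
    hconst.eventuallyEq_nhds.mono fun s hs => by rw [hs.deriv_eq, deriv_const]
  simp [hderiv.deriv_eq] at hpos

theorem HasDerivAt.nonpos_of_forall_Ioo_le {g : ℝ → ℝ} {g' a b : ℝ} (hg : HasDerivAt g g' a)
    (hab : a < b) (h : ∀ s ∈ Ioo a b, g s ≤ g a) : g' ≤ 0 := by
  have hmax : IsLocalMaxOn g (Ici a) a := by
    filter_upwards [Ico_mem_nhdsGE hab] with s hs
    rcases hs.1.eq_or_lt with rfl | has
    exacts [le_rfl, h s ⟨has, hs.2⟩]
  have hcone : (1 : ℝ) ∈ posTangentConeAt (Ici a) a :=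
    mem_posTangentConeAt_of_segment_subset fun z hz =>
      (segment_subset_Icc (le_add_of_nonneg_right zero_le_one) hz).1
  simpa using hmax.hasFDerivWithinAt_nonpos hg.hasFDerivAt.hasFDerivWithinAt hcone

theorem le_two_sqrt_mul_add_of_forall_lt {g a b ρ : ℝ} (ha : 0 ≤ a) (hb : 0 ≤ b) (hρ : 0 < ρ)
    (h : ∀ R, 0 < R → R < ρ → g ≤ a / R + b * R) : g ≤ 2 * √(a * b) + 2 * a / ρ := by
  rcases ha.eq_or_lt with rfl | ha
  · have hlim : Tendsto (fun R : ℝ => 0 / R + b * R) (𝓝[>] 0) (𝓝 0) := by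
      simpa using ((continuous_const_mul b).tendsto' 0 0 (mul_zero b)).mono_left
        nhdsWithin_le_nhds
    have hev : ∀ᶠ R in 𝓝[>] 0, g ≤ 0 / R + b * R :=
      eventually_of_mem (Ioo_mem_nhdsGT hρ) fun R hR => h R hR.1 hR.2
    simpa using ge_of_tendsto hlim hev
  -- `R = a / (√(ab) + 2a/ρ)` gives `a / R = √(ab) + 2a/ρ`, `b R ≤ √(ab)` and `R ≤ ρ / 2`.
  set s := √(a * b)
  have hden : 0 < s + 2 * a / ρ := by positivity
  have hR : 0 < a / (s + 2 * a / ρ) := by positivity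
  have hRρ : a / (s + 2 * a / ρ) < ρ := by
    rw [div_lt_iff₀ hden]
    nlinarith [Real.sqrt_nonneg (a * b), mul_div_cancel₀ (2 * a) hρ.ne']
  have hbR : b * (a / (s + 2 * a / ρ)) ≤ s := by
    rw [mul_div_assoc', div_le_iff₀ hden, mul_comm b, ← Real.sq_sqrt (mul_nonneg ha.le hb)]
    nlinarith [Real.sqrt_nonneg (a * b), div_nonneg (mul_nonneg zero_le_two ha.le) hρ.le]
  have := h _ hR hRρ
  rw [div_div_cancel₀ ha.ne'] at this
  linarith

theorem le_two_sqrt_mul_of_forall {g a b : ℝ} (ha : 0 ≤ a) (hb : 0 ≤ b)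
    (h : ∀ R, 0 < R → g ≤ a / R + b * R) : g ≤ 2 * √(a * b) := by
  have hlim : Tendsto (fun ρ : ℝ => 2 * √(a * b) + 2 * a / ρ) atTop (𝓝 (2 * √(a * b))) := by
    simpa using tendsto_const_nhds.add (tendsto_const_nhds.div_atTop (tendsto_id (α := ℝ)))
  exact ge_of_tendsto hlim <| (eventually_gt_atTop 0).mono fun ρ hρ =>
    le_two_sqrt_mul_add_of_forall_lt ha hb hρ fun R hR _ => h R hR

theorem le_two_sqrt_mul_add_div_infDist {X : Type*} [MetricSpace X] {K : Set X} {x : X}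
    {g a b : ℝ} (hK : IsOpen K) (hx : x ∈ K) (ha : 0 ≤ a) (hb : 0 ≤ b)
    (h : ∀ R, 0 < R → closedBall x R ⊆ K → g ≤ a / R + b * R) :
    g ≤ 2 * √(a * b) + 2 * a / infDist x Kᶜ := by
  rcases Kᶜ.eq_empty_or_nonempty with hKc | hKc
  · -- `K` is the whole space: `infDist x ∅ = 0`, so the last term is `2 * a / 0 = 0`.
    rw [hKc, infDist_empty, div_zero, add_zero]
    exact le_two_sqrt_mul_of_forall ha hb fun R hR =>
      h R hR (compl_empty_iff.1 hKc ▸ subset_univ _)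
  · have hδ : 0 < infDist x Kᶜ :=
      (hK.isClosed_compl.notMem_iff_infDist_pos hKc).1 (by simpa using hx)
    exact le_two_sqrt_mul_add_of_forall_lt ha hb hδ fun R hR hRδ =>
      h R hR ((closedBall_subset_ball hRδ).trans ball_infDist_compl_subset)

section NormedSpace

variable {E F : Type*} [NormedAddCommGroup E] [NormedSpace ℝ E] [NormedAddCommGroup F]
  [NormedSpace ℝ F]

theorem iteratedFDeriv_two_apply_eq_deriv_deriv_line {f : E → F} {x : E}
    (hf : ContDiffAt ℝ 2 f x) (v : E) :
    iteratedFDeriv ℝ 2 f x ![v, v] = deriv (deriv fun s : ℝ => f (x + s • v)) 0 := by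
  have hline (s : ℝ) : HasDerivAt (fun s : ℝ => x + s • v) v s := by
    simpa using ((hasDerivAt_id s).smul_const v).const_add x
  have hx : Tendsto (fun s : ℝ => x + s • v) (𝓝 0) (𝓝 x) := by
    simpa using (hline 0).continuousAt.tendsto
  have hderiv : deriv (fun s : ℝ => f (x + s • v)) =ᶠ[𝓝 (0 : ℝ)]
      fun s => fderiv ℝ f (x + s • v) v := by
    filter_upwards [hx.eventually (hf.eventually (by simp))] with s hs
    exact ((hs.differentiableAt two_ne_zero).hasFDerivAt.comp_hasDerivAt s (hline s)).deriv
  have hD : HasFDerivAt (fderiv ℝ f) (fderiv ℝ (fderiv ℝ f) x) (x + (0 : ℝ) • v) := by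
    rw [zero_smul, add_zero]
    exact ((hf.fderiv_right (m := 1) le_rfl).differentiableAt one_ne_zero).hasFDerivAt
  have hD' : HasDerivAt (fun s : ℝ => fderiv ℝ f (x + s • v)) (fderiv ℝ (fderiv ℝ f) x v) 0 :=
    hD.comp_hasDerivAt 0 (hline 0)
  have h2 : HasDerivAt (fun s : ℝ => fderiv ℝ f (x + s • v) v)
      (fderiv ℝ (fderiv ℝ f) x v v) 0 := by
    simpa using hD'.clm_apply (hasDerivAt_const 0 v)
  rw [iteratedFDeriv_two_apply, hderiv.deriv_eq, h2.deriv]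
  simp only [Matrix.cons_val_zero, Matrix.cons_val_one]

theorem fderiv_apply_le_of_odd_part_le {u : E → ℝ} {x e : E} {R B c : ℝ} (hR : 0 < R)
    (hu : DifferentiableAt ℝ u x)
    (h : ∀ s ∈ Ioo 0 R, (u (x + s • e) - u (x - s • e)) / 2 ≤ B * s + c * s ^ 2) :
    fderiv ℝ u x e ≤ B := by
  have hplus : HasDerivAt (fun s : ℝ => x + s • e) e 0 := by
    simpa using ((hasDerivAt_id (0 : ℝ)).smul_const e).const_add x
  have hminus : HasDerivAt (fun s : ℝ => x - s • e) (-e) 0 := by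
    simpa using ((hasDerivAt_id (0 : ℝ)).smul_const e).const_sub x
  have h1 : HasDerivAt (fun s : ℝ => u (x + s • e)) (fderiv ℝ u x e) 0 :=
    hu.hasFDerivAt.comp_hasDerivAt_of_eq 0 hplus (by simp)
  have h2 : HasDerivAt (fun s : ℝ => u (x - s • e)) (-fderiv ℝ u x e) 0 :=
    (hu.hasFDerivAt.comp_hasDerivAt_of_eq 0 hminus (by simp)).congr_deriv (map_neg _ _)
  have hpoly : HasDerivAt (fun s : ℝ => B * s + c * s ^ 2) B 0 := by
    simpa using ((hasDerivAt_id (0 : ℝ)).const_mul B).fun_add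
      ((hasDerivAt_pow 2 (0 : ℝ)).const_mul c)
  have hg : HasDerivAt (fun s => (u (x + s • e) - u (x - s • e)) / 2 - (B * s + c * s ^ 2))
      (fderiv ℝ u x e - B) 0 :=
    (((h1.sub h2).div_const 2).sub hpoly).congr_deriv (by ring)
  have := hg.nonpos_of_forall_Ioo_le hR fun s hs => by simpa using h s hs
  linarith

end NormedSpace

section InnerProductSpace

variable {E F : Type*} [NormedAddCommGroup E] [InnerProductSpace ℝ E]
  [NormedAddCommGroup F] [NormedSpace ℝ F]

def quadraticBarrier (x e : E) (A B C : ℝ) (y : E) : ℝ :=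
  A * ‖y - x‖ ^ 2 + B * ⟪y - x, e⟫ + C * ⟪y - x, e⟫ ^ 2

theorem contDiff_quadraticBarrier (x e : E) (A B C : ℝ) :
    ContDiff ℝ 2 (quadraticBarrier x e A B C) := by
  have hsub : ContDiff ℝ 2 fun y : E => y - x := contDiff_id.sub contDiff_const
  have hinner : ContDiff ℝ 2 fun y : E => ⟪y - x, e⟫ := hsub.inner ℝ contDiff_const
  exact (contDiff_const.mul ((contDiff_norm_sq ℝ).comp hsub)).add
    (contDiff_const.mul hinner) |>.add (contDiff_const.mul (hinner.pow 2))

def hyperplaneReflection (x e : E) (y : E) : E := x + (ℝ ∙ e)ᗮ.reflection (y - x)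

section hyperplaneReflection

variable {x e : E}

theorem norm_hyperplaneReflection_sub (y : E) :
    ‖hyperplaneReflection x e y - x‖ = ‖y - x‖ := by
  rw [hyperplaneReflection, add_sub_cancel_left, LinearIsometryEquiv.norm_map]

theorem hyperplaneReflection_eq_self {y : E} (hy : ⟪y - x, e⟫ = 0) :
    hyperplaneReflection x e y = y := by
  rw [hyperplaneReflection, Submodule.reflection_mem_subspace_eq_self, add_sub_cancel]
  rwa [Submodule.mem_orthogonal_singleton_iff_inner_left]

theorem hyperplaneReflection_add_smul (s : ℝ) :
    hyperplaneReflection x e (x + s • e) = x - s • e := by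
  simp [hyperplaneReflection, Submodule.reflection_orthogonalComplement_singleton_eq_neg,
    sub_eq_add_neg]

theorem contDiff_hyperplaneReflection : ContDiff ℝ 2 (hyperplaneReflection x e) := by
  unfold hyperplaneReflection
  fun_prop

end hyperplaneReflection

def halfBall (x e : E) (R : ℝ) : Set E := ball x R ∩ {y | 0 < ⟪y - x, e⟫}

theorem isOpen_halfBall (x e : E) (R : ℝ) : IsOpen (halfBall x e R) :=
  isOpen_ball.inter (isOpen_lt continuous_const (by fun_prop))

theorem mem_frontier_halfBall {x e y : E} {R : ℝ} (hy : y ∈ frontier (halfBall x e R)) :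
    ‖y - x‖ ≤ R ∧ 0 ≤ ⟪y - x, e⟫ ∧ (‖y - x‖ = R ∨ ⟪y - x, e⟫ = 0) := by
  have hcl : closure (halfBall x e R) ⊆ closedBall x R ∩ {z | 0 ≤ ⟪z - x, e⟫} :=
    closure_minimal
      (inter_subset_inter ball_subset_closedBall fun _ hz => show (0 : ℝ) ≤ _ from le_of_lt hz)
      (isClosed_closedBall.inter (isClosed_le continuous_const (by fun_prop)))
  rw [(isOpen_halfBall x e R).frontier_eq] at hy
  obtain ⟨⟨hyR, hye⟩, hyU⟩ := And.imp_left (fun h => hcl h) hy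
  rw [mem_closedBall_iff_norm] at hyR
  refine ⟨hyR, hye, ?_⟩
  by_contra! hne
  exact hyU ⟨mem_ball_iff_norm.2 (hyR.lt_of_ne hne.1), hye.lt_of_ne' hne.2⟩

theorem sub_comp_hyperplaneReflection_le_quadraticBarrier_of_mem_frontier {u : E → ℝ}
    {x e z : E} {R Mu A B C : ℝ} (he : ‖e‖ = 1) (hMu : ∀ y ∈ closedBall x R, |u y| ≤ Mu)
    (hA : 0 ≤ A) (hAR : Mu ≤ A * R ^ 2) (hC : C ≤ 0) (hBC : 0 ≤ B + C * R)
    (hz : z ∈ frontier (halfBall x e R)) :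
    (u z - u (hyperplaneReflection x e z)) / 2 ≤ quadraticBarrier x e A B C z := by
  obtain ⟨hzR, hze, hzR' | hze'⟩ := mem_frontier_halfBall hz
  · have hz : z ∈ closedBall x R := mem_closedBall_iff_norm.2 hzR
    have hσz : hyperplaneReflection x e z ∈ closedBall x R := by
      rwa [mem_closedBall_iff_norm, norm_hyperplaneReflection_sub]
    have h1 := abs_le.1 (hMu z hz)
    have h2 := abs_le.1 (hMu _ hσz)
    have hzeR : ⟪z - x, e⟫ ≤ R :=
      (real_inner_le_norm _ _).trans (by rw [he, mul_one]; exact hzR)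
    have hBCz : 0 ≤ B + C * ⟪z - x, e⟫ := by nlinarith
    have := mul_nonneg hze hBCz
    rw [quadraticBarrier, hzR']
    nlinarith
  · rw [hyperplaneReflection_eq_self hze', quadraticBarrier, hze']
    nlinarith [sq_nonneg ‖z - x‖]

variable [FiniteDimensional ℝ E]

theorem laplacian_eq_of_forall_line_eq_quadratic {f : E → ℝ} {y : E} (hf : ContDiffAt ℝ 2 f y)
    {γ : E → ℝ} (h : ∀ v, ∃ α β : ℝ, ∀ s : ℝ, f (y + s • v) = α + β * s + γ v * s ^ 2)
    {ι : Type*} [Fintype ι] (b : OrthonormalBasis ι ℝ E) :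
    Δ f y = 2 * ∑ i, γ (b i) := by
  rw [laplacian_eq_iteratedFDeriv_orthonormalBasis f b, Finset.mul_sum]
  refine Finset.sum_congr rfl fun i _ => ?_
  obtain ⟨α, β, hline⟩ := h (b i)
  rw [iteratedFDeriv_two_apply_eq_deriv_deriv_line hf, funext hline, deriv_deriv_quadratic]

theorem laplacian_quadraticBarrier (x e : E) (A B C : ℝ) (y : E) :
    Δ (quadraticBarrier x e A B C) y = 2 * (A * finrank ℝ E + C * ‖e‖ ^ 2) := by
  have hline (v : E) (s : ℝ) : quadraticBarrier x e A B C (y + s • v) =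
      quadraticBarrier x e A B C y
        + (2 * A * ⟪y - x, v⟫ + B * ⟪v, e⟫ + 2 * C * ⟪y - x, e⟫ * ⟪v, e⟫) * s
        + (A * ‖v‖ ^ 2 + C * ⟪v, e⟫ ^ 2) * s ^ 2 := by
    simp only [quadraticBarrier, add_sub_right_comm y, norm_add_sq_real, inner_add_left,
      inner_smul_left, inner_smul_right, norm_smul, mul_pow, Real.norm_eq_abs, sq_abs,
      RCLike.conj_to_real]
    ring
  let b := stdOrthonormalBasis ℝ E
  rw [laplacian_eq_of_forall_line_eq_quadratic (contDiff_quadraticBarrier x e A B C).contDiffAt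
    (fun v => ⟨_, _, hline v⟩) b, Finset.sum_add_distrib, ← Finset.mul_sum, ← Finset.mul_sum,
    b.sum_sq_inner_right]
  simp [b, b.orthonormal.1]

theorem laplacian_norm_sub_sq (a y : E) :
    Δ (fun z => ‖z - a‖ ^ 2) y = 2 * finrank ℝ E := by
  have h : (fun z => ‖z - a‖ ^ 2) = quadraticBarrier a 0 1 0 0 := by
    ext z
    simp [quadraticBarrier]
  simp [h, laplacian_quadraticBarrier]

theorem IsLocalMax.laplacian_nonpos {f : E → ℝ} {x : E} (h : IsLocalMax f x)
    (hf : ContDiffAt ℝ 2 f x) : Δ f x ≤ 0 := by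
  rw [laplacian_eq_iteratedFDeriv_stdOrthonormalBasis]
  refine Finset.sum_nonpos fun i _ => ?_
  rw [iteratedFDeriv_two_apply_eq_deriv_deriv_line hf]
  have hline : Tendsto (fun s : ℝ => x + s • stdOrthonormalBasis ℝ E i) (𝓝 0) (𝓝 x) :=
    Continuous.tendsto' (by fun_prop) 0 x (by simp)
  refine IsLocalMax.deriv_deriv_nonpos ?_ (hf.continuousAt.comp_of_eq (by fun_prop) (by simp))
  simpa [IsLocalMax, IsMaxFilter] using hline.eventually h

theorem laplacian_comp_linearIsometryEquiv_about (L : E ≃ₗᵢ[ℝ] E) (f : E → F) (a y : E) :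
    Δ (fun z => f (a + L (z - a))) y = Δ f (a + L (y - a)) := by
  have hcomp (z : E) : iteratedFDeriv ℝ 2 (fun w => f (a + L w)) z =
      (iteratedFDeriv ℝ 2 f (a + L z)).compContinuousLinearMap fun _ => (L : E →L[ℝ] E) := by
    have := L.toContinuousLinearEquiv.iteratedFDerivWithin_comp_right (fun w => f (a + w))
      uniqueDiffOn_univ (mem_univ (L z)) 2
    simp only [preimage_univ, iteratedFDerivWithin_univ] at this
    rw [← iteratedFDeriv_comp_add_left]
    exact this
  let b := stdOrthonormalBasis ℝ E
  rw [laplacian_eq_iteratedFDeriv_orthonormalBasis _ b,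
    laplacian_eq_iteratedFDeriv_orthonormalBasis f (b.map L)]
  simp only [iteratedFDeriv_comp_sub (f := fun w => f (a + L w)), hcomp]
  refine Finset.sum_congr rfl fun i _ => ?_
  rw [ContinuousMultilinearMap.compContinuousLinearMap_apply]
  congr 1
  funext j
  fin_cases j <;> simp [b]

theorem laplacian_comp_hyperplaneReflection {x e : E} (f : E → F) (y : E) :
    Δ (f ∘ hyperplaneReflection x e) y = Δ f (hyperplaneReflection x e y) :=
  laplacian_comp_linearIsometryEquiv_about _ f x y

theorem nonpos_of_laplacian_nonneg_of_nonpos_on_frontier [Nontrivial E] {U : Set E} {w : E → ℝ}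
    (hU : IsOpen U) (hUb : Bornology.IsBounded U) (hwc : ContinuousOn w (closure U))
    (hw : ∀ y ∈ U, ContDiffAt ℝ 2 w y) (hΔ : ∀ y ∈ U, 0 ≤ Δ w y)
    (hfr : ∀ y ∈ frontier U, w y ≤ 0) {y : E} (hy : y ∈ U) : w y ≤ 0 := by
  obtain ⟨ρ, hρ⟩ := hUb.closure.subset_closedBall y
  refine le_of_forall_pos_le_add fun δ hδ => ?_
  -- the perturbation `ε ‖z - y‖²` makes the Laplacian strictly positive on `U`
  set ε := δ / (ρ ^ 2 + 1)
  have hε : 0 < ε := by positivity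
  have hq : ContDiff ℝ 2 fun z : E => ‖z - y‖ ^ 2 :=
    (contDiff_norm_sq ℝ).comp (contDiff_id.sub contDiff_const)
  set wε := w + ε • fun z : E => ‖z - y‖ ^ 2
  obtain ⟨z, hzU, hzmax⟩ := hUb.isCompact_closure.exists_isMaxOn (f := wε)
    ⟨y, subset_closure hy⟩ (hwc.add (hq.continuous.continuousOn.const_smul ε))
  have hz : z ∈ frontier U := by
    refine hU.frontier_eq ▸ ⟨hzU, fun hzU' => ?_⟩
    have hqε : ContDiffAt ℝ 2 (ε • fun z : E => ‖z - y‖ ^ 2) z := hq.contDiffAt.const_smul ε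
    have hΔε := ((hzmax.on_subset subset_closure).isLocalMax (hU.mem_nhds hzU')).laplacian_nonpos
      ((hw z hzU').add hqε)
    rw [(hw z hzU').laplacian_add hqε, laplacian_smul ε hq.contDiffAt,
      laplacian_norm_sub_sq, smul_eq_mul] at hΔε
    have : (0 : ℝ) < finrank ℝ E := by exact_mod_cast finrank_pos
    nlinarith [hΔ z hzU']
  have hzρ : ‖z - y‖ ≤ ρ := by simpa [dist_eq_norm] using hρ hzU
  have hwεz : wε y ≤ wε z := hzmax (subset_closure hy)
  simp only [wε, Pi.add_apply, Pi.smul_apply, smul_eq_mul, sub_self, norm_zero] at hwεz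
  calc w y ≤ w z + ε * ‖z - y‖ ^ 2 := by linarith
    _ ≤ 0 + ε * ρ ^ 2 := by gcongr; exact hfr z hz
    _ ≤ 0 + δ := by
      gcongr
      rw [div_mul_eq_mul_div, div_le_iff₀ (by positivity)]
      nlinarith

theorem sub_comp_hyperplaneReflection_le_quadraticBarrier [Nontrivial E]
    {u : E → ℝ} {x e : E} {R Mu Mf A B C : ℝ} (he : ‖e‖ = 1)
    (hcont : ContinuousOn u (closedBall x R)) (hu : ∀ y ∈ ball x R, ContDiffAt ℝ 2 u y)
    (hMu : ∀ y ∈ closedBall x R, |u y| ≤ Mu) (hMf : ∀ y ∈ ball x R, |Δ u y| ≤ Mf)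
    (hA : 0 ≤ A) (hAR : Mu ≤ A * R ^ 2) (hC : C ≤ 0) (hBC : 0 ≤ B + C * R)
    (hΔ : 2 * (A * finrank ℝ E + C) ≤ -Mf) {y : E} (hy : y ∈ halfBall x e R) :
    (u y - u (hyperplaneReflection x e y)) / 2 ≤ quadraticBarrier x e A B C y := by
  set σ := hyperplaneReflection x e
  set ψ := quadraticBarrier x e A B C
  have hσ : MapsTo σ (closedBall x R) (closedBall x R) := fun z hz => by
    rwa [mem_closedBall_iff_norm, norm_hyperplaneReflection_sub, ← mem_closedBall_iff_norm]
  have hσ' : MapsTo σ (ball x R) (ball x R) := fun z hz => by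
    rwa [mem_ball_iff_norm, norm_hyperplaneReflection_sub, ← mem_ball_iff_norm]
  have huσ : ∀ z ∈ ball x R, ContDiffAt ℝ 2 (u ∘ σ) z := fun z hz =>
    (hu (σ z) (hσ' hz)).comp z contDiff_hyperplaneReflection.contDiffAt
  have hφ : ∀ z ∈ ball x R, ContDiffAt ℝ 2 (u - u ∘ σ) z := fun z hz => (hu z hz).sub (huσ z hz)
  have hψ := contDiff_quadraticBarrier x e A B C
  suffices ((2 : ℝ)⁻¹ • (u - u ∘ σ) - ψ) y ≤ 0 by
    simp only [Pi.sub_apply, Pi.smul_apply, Function.comp_apply, smul_eq_mul] at this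
    linarith
  refine nonpos_of_laplacian_nonneg_of_nonpos_on_frontier (isOpen_halfBall x e R)
    (isBounded_ball.subset inter_subset_left) ?_ (fun z hz => ?_) (fun z hz => ?_)
    (fun z hz => ?_) hy
  · have hcontσ : ContinuousOn (u ∘ σ) (closedBall x R) :=
      hcont.comp contDiff_hyperplaneReflection.continuous.continuousOn hσ
    exact (((hcont.sub hcontσ).const_smul (2 : ℝ)⁻¹).sub hψ.continuous.continuousOn).mono
      ((closure_mono inter_subset_left).trans closure_ball_subset_closedBall)
  · exact ((hφ z hz.1).const_smul (2 : ℝ)⁻¹).sub hψ.contDiffAt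
  · have hφ' : ContDiffAt ℝ 2 ((2 : ℝ)⁻¹ • (u - u ∘ σ)) z := (hφ z hz.1).const_smul (2 : ℝ)⁻¹
    rw [hφ'.laplacian_sub hψ.contDiffAt, laplacian_smul _ (hφ z hz.1),
      (hu z hz.1).laplacian_sub (huσ z hz.1),
      laplacian_comp_hyperplaneReflection, laplacian_quadraticBarrier, he, one_pow, mul_one,
      smul_eq_mul]
    have h1 := abs_le.1 (hMf z hz.1)
    have h2 := abs_le.1 (hMf (σ z) (hσ' hz.1))
    linarith [h1.1, h2.2]
  · have := sub_comp_hyperplaneReflection_le_quadraticBarrier_of_mem_frontier he hMu hA hAR hC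
      hBC hz
    simp only [Pi.sub_apply, Pi.smul_apply, Function.comp_apply, smul_eq_mul]
    linarith

theorem fderiv_apply_le_of_abs_laplacian_le {u : E → ℝ} {x e : E} {R Mu Mf : ℝ} (hR : 0 < R)
    (he : ‖e‖ = 1) (hcont : ContinuousOn u (closedBall x R))
    (hu : ∀ y ∈ ball x R, ContDiffAt ℝ 2 u y) (hMu : ∀ y ∈ closedBall x R, |u y| ≤ Mu)
    (hMf : ∀ y ∈ ball x R, |Δ u y| ≤ Mf) :
    fderiv ℝ u x e ≤ finrank ℝ E * Mu / R + Mf / 2 * R := by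
  have : Nontrivial E := nontrivial_of_ne e 0 (by rintro rfl; simp at he)
  have hMu0 : 0 ≤ Mu := (abs_nonneg _).trans (hMu x (mem_closedBall_self hR.le))
  have hMf0 : 0 ≤ Mf := (abs_nonneg _).trans (hMf x (mem_ball_self hR))
  set B := finrank ℝ E * Mu / R + Mf / 2 * R
  have hB : 0 ≤ B := by positivity
  refine fderiv_apply_le_of_odd_part_le (c := Mu / R ^ 2 - B / R) hR
    ((hu x (mem_ball_self hR)).differentiableAt two_ne_zero) fun s hs => ?_
  have hs' : x + s • e ∈ halfBall x e R := by
    constructor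
    · simp [norm_smul, he, abs_of_pos hs.1, hs.2]
    · simp [inner_smul_left, he, hs.1]
  have := sub_comp_hyperplaneReflection_le_quadraticBarrier (C := -B / R) he hcont hu hMu hMf
    (by positivity) (div_mul_cancel₀ Mu (pow_ne_zero 2 hR.ne')).ge
    (div_nonpos_of_nonpos_of_nonneg (neg_nonpos.2 hB) hR.le)
    (by rw [div_mul_cancel₀ _ hR.ne', add_neg_cancel])
    (le_of_eq (by simp only [B]; field_simp; ring)) hs'
  rw [hyperplaneReflection_add_smul] at this
  simp only [quadraticBarrier, add_sub_cancel_left, norm_smul, he, inner_smul_left,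
    real_inner_self_eq_norm_sq, Real.norm_eq_abs, abs_of_pos hs.1, RCLike.conj_to_real, one_pow,
    mul_one, neg_div, neg_mul] at this
  linarith

theorem norm_fderiv_le_of_abs_laplacian_le {u : E → ℝ} {x : E} {R Mu Mf : ℝ} (hR : 0 < R)
    (hcont : ContinuousOn u (closedBall x R)) (hu : ∀ y ∈ ball x R, ContDiffAt ℝ 2 u y)
    (hMu : ∀ y ∈ closedBall x R, |u y| ≤ Mu) (hMf : ∀ y ∈ ball x R, |Δ u y| ≤ Mf) :
    ‖fderiv ℝ u x‖ ≤ finrank ℝ E * Mu / R + Mf / 2 * R := by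
  have hMu0 : 0 ≤ Mu := (abs_nonneg _).trans (hMu x (mem_closedBall_self hR.le))
  have hMf0 : 0 ≤ Mf := (abs_nonneg _).trans (hMf x (mem_ball_self hR))
  refine ContinuousLinearMap.opNorm_le_of_unit_norm (by positivity) fun e he => ?_
  rw [Real.norm_eq_abs, abs_le]
  refine ⟨?_, fderiv_apply_le_of_abs_laplacian_le hR he hcont hu hMu hMf⟩
  have := fderiv_apply_le_of_abs_laplacian_le hR (e := -e) (by rwa [norm_neg]) hcont hu hMu hMf
  rw [map_neg] at this
  linarith

end InnerProductSpace

theorem lap_eq_laplacian {d : ℕ} {u : Euc d → ℝ} {x : Euc d} (hu : ContDiffAt ℝ 2 u x) :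
    lap d u x = Δ u x := by
  have hD : DifferentiableAt ℝ (fderiv ℝ u) x :=
    (hu.fderiv_right (m := 1) le_rfl).differentiableAt one_ne_zero
  rw [laplacian_eq_iteratedFDeriv_orthonormalBasis u (EuclideanSpace.basisFun (Fin d) ℝ), lap]
  refine Finset.sum_congr rfl fun i _ => ?_
  rw [iteratedFDeriv_two_apply, fderiv_clm_apply hD (differentiableAt_const _)]
  simp

/-- interpolation (Gagliardo-Nirenberg type) gradient estimate:
if −Δu = f on an open set K with u, f bounded on K, then
|∇u(x)|² ≤ C(‖f‖_∞‖u‖_∞ + dist(x,∂K)⁻²‖u‖_∞²), with C depending only on d. -/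
theorem gradient_interpolation_estimate (d : ℕ) (hd1 : 1 ≤ d) :
    ∃ C : ℝ, 0 < C ∧ ∀ K : Set (Euc d), IsOpen K → K.Nonempty →
      ∀ u f : Euc d → ℝ, ContDiffOn ℝ 2 u K →
        (∀ x ∈ K, -lap d u x = f x) →
        ∀ Mu Mf : ℝ, (∀ x ∈ K, |u x| ≤ Mu) → (∀ x ∈ K, |f x| ≤ Mf) →
          ∀ x ∈ K, ‖fderiv ℝ u x‖ ^ 2
            ≤ C * (Mf * Mu + Mu ^ 2 / (Metric.infDist x Kᶜ) ^ 2) := by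
  refine ⟨8 * d ^ 2, by positivity, fun K hK _ u f hu hf Mu Mf hMu hMf x hx => ?_⟩
  have hMu0 : 0 ≤ Mu := (abs_nonneg _).trans (hMu x hx)
  have hMf0 : 0 ≤ Mf := (abs_nonneg _).trans (hMf x hx)
  have hgrad : ‖fderiv ℝ u x‖ ≤ 2 * √(d * Mu * (Mf / 2)) + 2 * (d * Mu) / infDist x Kᶜ := by
    refine le_two_sqrt_mul_add_div_infDist hK hx (by positivity) (by positivity)
      fun R hR hRK => ?_
    have hu' (y : Euc d) (hy : y ∈ ball x R) : ContDiffAt ℝ 2 u y :=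
      hu.contDiffAt (hK.mem_nhds (hRK (ball_subset_closedBall hy)))
    have hΔ (y : Euc d) (hy : y ∈ ball x R) : |Δ u y| ≤ Mf := by
      rw [← lap_eq_laplacian (hu' y hy), ← abs_neg, hf y (hRK (ball_subset_closedBall hy))]
      exact hMf y (hRK (ball_subset_closedBall hy))
    simpa [finrank_euclideanSpace_fin, mul_div_assoc] using
      norm_fderiv_le_of_abs_laplacian_le hR (hu.continuousOn.mono hRK) hu'
        (fun y hy => hMu y (hRK hy)) hΔ
  have hd : 4 * (d : ℝ) ≤ 8 * d ^ 2 := by nlinarith [(by exact_mod_cast hd1 : (1 : ℝ) ≤ d)]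
  have hs := Real.sq_sqrt (by positivity : 0 ≤ d * Mu * (Mf / 2))
  set δ := infDist x Kᶜ
  have hq : (2 * (d * Mu) / δ) ^ 2 = 4 * d ^ 2 * (Mu ^ 2 / δ ^ 2) := by ring
  calc ‖fderiv ℝ u x‖ ^ 2 ≤ (2 * √(d * Mu * (Mf / 2)) + 2 * (d * Mu) / δ) ^ 2 := by gcongr
    _ ≤ 4 * d * (Mf * Mu) + 8 * d ^ 2 * (Mu ^ 2 / δ ^ 2) := by
        nlinarith [sq_nonneg (2 * √(d * Mu * (Mf / 2)) - 2 * (d * Mu) / δ)]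
    _ ≤ 8 * d ^ 2 * (Mf * Mu + Mu ^ 2 / δ ^ 2) := by
        nlinarith [mul_le_mul_of_nonneg_right hd (mul_nonneg hMf0 hMu0)]

end
end
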